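/- arXiv:1810.10208 — 4 statements merged into one kernel-verified Lean document; each statement's English description precedes it below -/
import Mathlib

section
/- Let H be a separable real Hilbert space with orthonormal basis (e_i). Set v = S_{1,1} and w = Σ_{n≥1} (1/n²) S_{n,n+1} (a Hilbert–Schmidt operator). Then for every k ∈ ℕ, the operator S_{1,k} belongs to the Lie algebra generated by v and w; in particular this Lie algebra is infinite dimensional. -/
/-!
With `E i j` the matrix units and `c n` the weight of `S (n+1) (n+2)` in `w`: since `v = 2 E 1 1`,
bracketing with `v` sends `E 1 p - E p 1` to `2 S 1 p` (`p ≠ 1`) and kills `E a b - E b a` for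
`a, b ≠ 1`, while `⁅S 1 k, S (n+1) (n+2)⁆` is a combination of such antisymmetric units, nonzero
only for `n + 1 = k`, `n + 2 = k` or `n = 0`. Bracketing commutes with the norm-convergent series
`w`, so `⁅v, ⁅v, w⁆⁆ = 4 c 0 • S 1 2` and, for `k ≥ 3`,
`⁅v, ⁅S 1 k, w⁆⁆ = 2 c (k-1) • S 1 (k+1) + 2 c (k-2) • S 1 (k-1)` (only the first term for
`k = 2`). No weight vanishes, so induction on `k` puts every `S 1 k` into the Lie algebra.
At `e 1` the operators `S 1 k`, `k ≥ 2`, take the orthonormal values `e k`, so they are linearly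
independent.
-/

attribute [local instance 100] LieRing.ofAssociativeRing

open InnerProductSpace

def IsMatrixUnitFamily {ι A : Type*} [DecidableEq ι] [MulZeroClass A] (E : ι → ι → A) : Prop :=
  ∀ i j k l, E i j * E k l = if j = k then E i l else 0

def symmUnit {ι A : Type*} [Add A] (E : ι → ι → A) (i j : ι) : A := E i j + E j i

noncomputable def weightedChain {A : Type*} [AddCommMonoid A] [TopologicalSpace A] [Module ℝ A]
    (c : ℕ → ℝ) (E : ℕ → ℕ → A) : A :=
  ∑' n, c n • symmUnit E (n + 1) (n + 2)

namespace IsMatrixUnitFamily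

variable {A : Type*} [Ring A] {E : ℕ → ℕ → A}

theorem lie_symmUnit_one_one_sub (hE : IsMatrixUnitFamily E) (a b : ℕ) :
    ⁅symmUnit E 1 1, E a b - E b a⁆ =
      (if a = 1 then 2 • symmUnit E 1 b else 0) - (if b = 1 then 2 • symmUnit E 1 a else 0) := by
  simp only [symmUnit, Ring.lie_def, add_mul, mul_add, sub_mul, mul_sub, hE _ _ _ _]
  split_ifs <;> first | omega | (subst_vars; abel)

theorem lie_symmUnit_one_symmUnit_succ (hE : IsMatrixUnitFamily E) (k n : ℕ) :
    ⁅symmUnit E 1 k, symmUnit E (n + 1) (n + 2)⁆ =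
      (if k = n + 1 then E 1 (n + 2) - E (n + 2) 1 else 0) +
      (if k = n + 2 then E 1 (n + 1) - E (n + 1) 1 else 0) +
      (if n = 0 then E k 2 - E 2 k else 0) := by
  simp only [symmUnit, Ring.lie_def, add_mul, mul_add, hE _ _ _ _]
  split_ifs <;> first | omega | (subst_vars; abel)

theorem lie_one_one_lie_one_one_symmUnit_succ (hE : IsMatrixUnitFamily E) (n : ℕ) :
    ⁅symmUnit E 1 1, ⁅symmUnit E 1 1, symmUnit E (n + 1) (n + 2)⁆⁆ =
      if n = 0 then 4 • symmUnit E 1 2 else 0 := by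
  rw [hE.lie_symmUnit_one_symmUnit_succ]
  split_ifs <;> simp only [lie_add, lie_zero, hE.lie_symmUnit_one_one_sub] <;> (try split_ifs) <;>
    first | omega | (subst_vars; abel)

/-- For `m = 0` the second term is absent because `⁅S 1 2, S 1 2⁆ = 0`. -/
theorem lie_one_one_lie_one_add_two_symmUnit_succ (hE : IsMatrixUnitFamily E) (m n : ℕ) :
    ⁅symmUnit E 1 1, ⁅symmUnit E 1 (m + 2), symmUnit E (n + 1) (n + 2)⁆⁆ =
      (if n = m + 1 then 2 • symmUnit E 1 (m + 3) else 0) +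
      (if n = m ∧ m ≠ 0 then 2 • symmUnit E 1 (m + 1) else 0) := by
  rw [hE.lie_symmUnit_one_symmUnit_succ, ite_and]
  split_ifs <;> simp only [lie_add, lie_zero, hE.lie_symmUnit_one_one_sub] <;> (try split_ifs) <;>
    first | omega | (subst_vars; abel)

end IsMatrixUnitFamily

section TopologicalRing

variable {ι A : Type*} [Ring A] [TopologicalSpace A] [IsTopologicalRing A] {f : ι → A}

theorem Summable.lie_left (hf : Summable f) (X : A) : Summable fun n => ⁅X, f n⁆ := by
  simpa only [Ring.lie_def] using (hf.mul_left X).sub (hf.mul_right X)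

theorem lie_tsum [T2Space A] (hf : Summable f) (X : A) : ⁅X, ∑' n, f n⁆ = ∑' n, ⁅X, f n⁆ := by
  simp only [Ring.lie_def]
  rw [(hf.mul_left X).tsum_sub (hf.mul_right X), hf.tsum_mul_left, hf.tsum_mul_right]

end TopologicalRing

theorem summable_smul_of_norm_le {ι 𝕜 X : Type*} [NormedField 𝕜] [NormedAddCommGroup X]
    [NormedSpace 𝕜 X] [CompleteSpace X] {c : ι → 𝕜} {x : ι → X} {C : ℝ}
    (hc : Summable fun i => ‖c i‖) (hx : ∀ i, ‖x i‖ ≤ C) : Summable fun i => c i • x i :=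
  .of_norm_bounded (hc.mul_right C) fun i => by
    rw [norm_smul]; exact mul_le_mul_of_nonneg_left (hx i) (norm_nonneg _)

section WeightedChain

variable {A : Type*} [NormedRing A] [NormedAlgebra ℝ A] {E : ℕ → ℕ → A} {c : ℕ → ℝ}

theorem lie_lie_tsum_smul {T : ℕ → A} (hsum : Summable fun n => c n • T n) (X Y : A) :
    ⁅X, ⁅Y, ∑' n, c n • T n⁆⁆ = ∑' n, c n • ⁅X, ⁅Y, T n⁆⁆ := by
  rw [lie_tsum hsum, lie_tsum (hsum.lie_left Y)]
  simp only [lie_smul]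

namespace IsMatrixUnitFamily

theorem lie_one_one_lie_one_one_weightedChain (hE : IsMatrixUnitFamily E)
    (hsum : Summable fun n => c n • symmUnit E (n + 1) (n + 2)) :
    ⁅symmUnit E 1 1, ⁅symmUnit E 1 1, weightedChain c E⁆⁆ = (4 * c 0) • symmUnit E 1 2 := by
  rw [weightedChain, lie_lie_tsum_smul hsum, tsum_eq_single 0 fun n hn => by
    rw [hE.lie_one_one_lie_one_one_symmUnit_succ, if_neg hn, smul_zero]]
  rw [hE.lie_one_one_lie_one_one_symmUnit_succ, if_pos rfl]
  module

theorem lie_one_one_lie_one_add_two_weightedChain (hE : IsMatrixUnitFamily E)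
    (hsum : Summable fun n => c n • symmUnit E (n + 1) (n + 2)) (m : ℕ) :
    ⁅symmUnit E 1 1, ⁅symmUnit E 1 (m + 2), weightedChain c E⁆⁆ =
      (2 * c (m + 1)) • symmUnit E 1 (m + 3) +
        (if m = 0 then 0 else 2 * c m) • symmUnit E 1 (m + 1) := by
  rw [weightedChain, lie_lie_tsum_smul hsum, tsum_eq_sum (s := {m, m + 1}) fun n hn => ?_]
  · rw [Finset.sum_pair (by omega)]
    simp only [hE.lie_one_one_lie_one_add_two_symmUnit_succ, true_and]
    split_ifs <;> first | omega | module
  · simp only [Finset.mem_insert, Finset.mem_singleton, not_or] at hn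
    simp [hE.lie_one_one_lie_one_add_two_symmUnit_succ, hn.1, hn.2]

theorem symmUnit_one_mem_lieSpan (hE : IsMatrixUnitFamily E)
    (hsum : Summable fun n => c n • symmUnit E (n + 1) (n + 2)) (hc : ∀ n, c n ≠ 0) (k : ℕ)
    (hk : 1 ≤ k) :
    symmUnit E 1 k ∈ LieSubalgebra.lieSpan ℝ A {symmUnit E 1 1, weightedChain c E} := by
  set L := LieSubalgebra.lieSpan ℝ A {symmUnit E 1 1, weightedChain c E}
  have hv : symmUnit E 1 1 ∈ L := LieSubalgebra.subset_lieSpan (by simp)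
  have hw : weightedChain c E ∈ L := LieSubalgebra.subset_lieSpan (by simp)
  have key : ∀ m, symmUnit E 1 (m + 1) ∈ L ∧ symmUnit E 1 (m + 2) ∈ L := by
    intro m
    induction m with
    | zero =>
      have h := L.lie_mem hv (L.lie_mem hv hw)
      rw [hE.lie_one_one_lie_one_one_weightedChain hsum] at h
      exact ⟨hv, (L.toSubmodule.smul_mem_iff (mul_ne_zero four_ne_zero (hc 0))).mp h⟩
    | succ m ih =>
      have h := L.lie_mem hv (L.lie_mem ih.2 hw)
      rw [hE.lie_one_one_lie_one_add_two_weightedChain hsum m] at h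
      refine ⟨ih.2, (L.toSubmodule.smul_mem_iff (mul_ne_zero two_ne_zero (hc (m + 1)))).mp ?_⟩
      exact (L.toSubmodule.add_mem_iff_left (L.toSubmodule.smul_mem _ ih.1)).mp h
  obtain ⟨m, rfl⟩ := Nat.exists_eq_add_of_le' hk
  exact (key m).1

end IsMatrixUnitFamily

end WeightedChain

section RankOne

variable {𝕜 H : Type*} [RCLike 𝕜] [NormedAddCommGroup H] [InnerProductSpace 𝕜 H] {e : ℕ → H}

theorem isMatrixUnitFamily_rankOne (he : Orthonormal 𝕜 e) :
    IsMatrixUnitFamily fun i j => rankOne 𝕜 (e i) (e j) := by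
  intro i j k l
  rw [ContinuousLinearMap.mul_def, rankOne_comp_rankOne, orthonormal_iff_ite.mp he]
  split_ifs <;> simp

theorem linearIndependent_symmUnit_rankOne (he : Orthonormal 𝕜 e) :
    LinearIndependent 𝕜 fun k => symmUnit (fun i j => rankOne 𝕜 (e i) (e j)) 1 (k + 2) := by
  refine .of_comp (ContinuousLinearMap.apply 𝕜 H (e 1)).toLinearMap ?_
  convert he.linearIndependent.comp (· + 2) (add_left_injective 2) using 1
  ext k
  simp [symmUnit, orthonormal_iff_ite.mp he, he.1]

end RankOne

theorem LieSubalgebra.not_finite_of_linearIndependent {R L ι : Type*} [CommRing R] [Nontrivial R]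
    [LieRing L] [LieAlgebra R L] [Infinite ι] (K : LieSubalgebra R L) {x : ι → L}
    (hx : LinearIndependent R x) (hmem : ∀ i, x i ∈ K) : ¬ Module.Finite R K := fun _ =>
  Module.Finite.not_linearIndependent_of_infinite (fun i => (⟨x i, hmem i⟩ : K))
    (.of_comp K.toSubmodule.subtype hx)

/-- For `v = S_{1,1}` and `w = Σ_{n ≥ 1} (1/n²) S_{n,n+1}`, every `S_{1,k}` (`k ≥ 1`) belongs
to the Lie algebra generated by `v` and `w` (inside the bounded operators, with bracket
`[X,Y] = XY − YX`); in particular this Lie algebra is infinite dimensional. -/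
theorem stmt3 {H : Type*} [NormedAddCommGroup H] [InnerProductSpace ℝ H] [CompleteSpace H]
    (e : HilbertBasis ℕ ℝ H)
    (E : ℕ → ℕ → H →L[ℝ] H)
    (hE : ∀ i j (x : H), E i j x = (inner ℝ x (e j) : ℝ) • e i)
    (S : ℕ → ℕ → H →L[ℝ] H)
    (hS : ∀ i j, S i j = E i j + E j i)
    (v w : H →L[ℝ] H)
    (hv : v = S 1 1)
    (hw : w = ∑' n : ℕ, (1 / ((n : ℝ) + 1) ^ 2) • S (n + 1) (n + 2)) :
    (∀ k : ℕ, 1 ≤ k → S 1 k ∈ LieSubalgebra.lieSpan ℝ (H →L[ℝ] H) {v, w}) ∧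
      ¬ Module.Finite ℝ (LieSubalgebra.lieSpan ℝ (H →L[ℝ] H) {v, w}) := by
  obtain rfl : E = fun i j => rankOne ℝ (e i) (e j) := by
    ext i j x
    rw [hE, rankOne_apply, real_inner_comm]
  obtain rfl : S = symmUnit _ := funext₂ hS
  subst hv hw
  have hweights : Summable fun n : ℕ => ‖1 / ((n : ℝ) + 1) ^ 2‖ := by
    simpa using ((summable_nat_add_iff 1).mpr (Real.summable_one_div_nat_pow.mpr one_lt_two)).abs
  have hnorm (i j : ℕ) : ‖symmUnit (fun i j => rankOne ℝ (e i) (e j)) i j‖ ≤ 2 :=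
    (norm_add_le _ _).trans (by simp [e.orthonormal.1]; norm_num)
  have hmem := (isMatrixUnitFamily_rankOne e.orthonormal).symmUnit_one_mem_lieSpan
    (summable_smul_of_norm_le hweights fun n => hnorm (n + 1) (n + 2)) fun n => by positivity
  exact ⟨hmem, LieSubalgebra.not_finite_of_linearIndependent _
    (linearIndependent_symmUnit_rankOne e.orthonormal) fun k => hmem (k + 2) (by omega)⟩
end

section
/- Let H be a real Hilbert space with orthonormal basis (e_i)_{i∈ℕ} and quadratic form Q with Q(e_1)=Q(e_2)=1 and Q(e_i)=−1 for i≥3. Let x, y be the isotropic lines spanned by x̄ = e_1 + e_3 and ȳ = −e_1 + e_3. Then the set of isotropic lines z with Q(x̄, z̄) < 0 and Q(ȳ, z̄) < 0 (for a suitable representative z̄) and positive orientation condition is parametrized, via z̄ = u + v with u ∈ span(e_1,e_2), v ⊥ span(e_1,e_2), ‖u‖=‖v‖=1, by the set of pairs (u₁, v′) with |u₁|² + ‖v′‖² < 1 and v′ ⊥ e₃, which is a bounded convex subset of a Hilbert space. In particular the interval I_{x,y} is homeomorphic to a bounded convex subset of a Hilbert space. -/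
/-!
Write `aᵢ = ⟪w, e i⟫`. On the sphere `‖w‖² = 2`, isotropy `Q(w, w) = 0` says `a₀² + a₁² = 1`, and
`Q(x̄, w) = a₀ - a₂`, `Q(ȳ, w) = -a₀ - a₂`, so both are negative iff `|a₀| < a₂`. Deleting the
`e 1`, `e 2` components sends `w` to `z` with `‖z‖² = 2 - a₁² - a₂² = 1 + a₀² - a₂² < 1`.
Since `a₁, a₂ > 0`, they are recovered from `z` as `√(1 - a₀²)` and `√(1 + a₀² - ‖z‖²)`, and both
maps are continuous.
-/

open scoped RealInnerProductSpace
open Metric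

namespace SignatureTwoInterval

variable {E : Type*} [NormedAddCommGroup E] [InnerProductSpace ℝ E]

def coneInterval (e : ℕ → E) : Set E :=
  {w | ‖w‖ ^ 2 = 2 ∧ ⟪w, e 0⟫ ^ 2 + ⟪w, e 1⟫ ^ 2 = 1 ∧ |⟪w, e 0⟫| < ⟪w, e 2⟫ ∧ 0 < ⟪w, e 1⟫}

def perpBall (e : ℕ → E) : Set E :=
  {z | ⟪z, e 1⟫ = 0 ∧ ⟪z, e 2⟫ = 0 ∧ ‖z‖ < 1}

def orthogonalPart (e : ℕ → E) (w : E) : E :=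
  w - ⟪w, e 1⟫ • e 1 - ⟪w, e 2⟫ • e 2

noncomputable def liftToCone (e : ℕ → E) (z : E) : E :=
  z + √(1 - ⟪z, e 0⟫ ^ 2) • e 1 + √(1 + ⟪z, e 0⟫ ^ 2 - ‖z‖ ^ 2) • e 2

theorem convex_perpBall (e : ℕ → E) : Convex ℝ (perpBall e) := by
  have hker : ∀ u : E, Convex ℝ {z : E | ⟪z, u⟫ = 0} := fun u =>
    convex_hyperplane ⟨fun x y => inner_add_left x y u, fun c x => real_inner_smul_left x u c⟩ 0
  have : perpBall e = {z | ⟪z, e 1⟫ = 0} ∩ ({z | ⟪z, e 2⟫ = 0} ∩ ball 0 1) := by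
    ext; simp [perpBall]
  rw [this]
  exact (hker _).inter ((hker _).inter (convex_ball 0 1))

theorem isBounded_perpBall (e : ℕ → E) : Bornology.IsBounded (perpBall e) :=
  isBounded_ball.subset fun _ hz => mem_ball_zero_iff.2 hz.2.2

variable {e : ℕ → E}

theorem inner_add_smul_add_smul (he : Orthonormal ℝ e) (z : E) (b c : ℝ) :
    ⟪z + b • e 1 + c • e 2, e 0⟫ = ⟪z, e 0⟫ ∧
    ⟪z + b • e 1 + c • e 2, e 1⟫ = ⟪z, e 1⟫ + b ∧
    ⟪z + b • e 1 + c • e 2, e 2⟫ = ⟪z, e 2⟫ + c := by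
  simp [inner_add_left, real_inner_smul_left, orthonormal_iff_ite.mp he, he.1]

theorem norm_add_smul_add_smul_sq (he : Orthonormal ℝ e) (z : E) (b c : ℝ) :
    ‖z + b • e 1 + c • e 2‖ ^ 2 =
      ‖z‖ ^ 2 + 2 * b * ⟪z, e 1⟫ + 2 * c * ⟪z, e 2⟫ + b ^ 2 + c ^ 2 := by
  simp only [← real_inner_self_eq_norm_sq, inner_add_left, inner_add_right, real_inner_smul_left,
    real_inner_smul_right, orthonormal_iff_ite.mp he, real_inner_comm z]
  norm_num
  ring

theorem orthogonalPart_add_inner_smul (e : ℕ → E) (w : E) :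
    orthogonalPart e w + ⟪w, e 1⟫ • e 1 + ⟪w, e 2⟫ • e 2 = w := by
  rw [orthogonalPart]
  abel

theorem inner_orthogonalPart (he : Orthonormal ℝ e) (w : E) :
    ⟪orthogonalPart e w, e 0⟫ = ⟪w, e 0⟫ ∧ ⟪orthogonalPart e w, e 1⟫ = 0 ∧
      ⟪orthogonalPart e w, e 2⟫ = 0 := by
  obtain ⟨h0, h1, h2⟩ := inner_add_smul_add_smul he (orthogonalPart e w) ⟪w, e 1⟫ ⟪w, e 2⟫
  rw [orthogonalPart_add_inner_smul] at h0 h1 h2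
  exact ⟨h0.symm, by linarith, by linarith⟩

theorem norm_orthogonalPart_sq (he : Orthonormal ℝ e) (w : E) :
    ‖orthogonalPart e w‖ ^ 2 = ‖w‖ ^ 2 - ⟪w, e 1⟫ ^ 2 - ⟪w, e 2⟫ ^ 2 := by
  have h := norm_add_smul_add_smul_sq he (orthogonalPart e w) ⟪w, e 1⟫ ⟪w, e 2⟫
  rw [orthogonalPart_add_inner_smul, (inner_orthogonalPart he w).2.1,
    (inner_orthogonalPart he w).2.2] at h
  linarith

theorem orthogonalPart_add_smul_add_smul (he : Orthonormal ℝ e) {z : E} (h1 : ⟪z, e 1⟫ = 0)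
    (h2 : ⟪z, e 2⟫ = 0) (b c : ℝ) : orthogonalPart e (z + b • e 1 + c • e 2) = z := by
  obtain ⟨-, hb, hc⟩ := inner_add_smul_add_smul he z b c
  rw [orthogonalPart, hb, hc, h1, h2, zero_add, zero_add]
  abel

theorem orthogonalPart_mem_perpBall (he : Orthonormal ℝ e) {w : E} (hw : w ∈ coneInterval e) :
    orthogonalPart e w ∈ perpBall e := by
  obtain ⟨hnorm, hcirc, hlt, -⟩ := hw
  obtain ⟨-, h1, h2⟩ := inner_orthogonalPart he w
  have h02 : ⟪w, e 0⟫ ^ 2 < ⟪w, e 2⟫ ^ 2 := by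
    simpa [sq_abs] using sq_lt_sq' (neg_lt_of_abs_lt hlt) (lt_of_abs_lt hlt)
  refine ⟨h1, h2, (sq_lt_one_iff₀ (norm_nonneg _)).1 ?_⟩
  rw [norm_orthogonalPart_sq he]
  linarith

theorem liftToCone_mem_coneInterval (he : Orthonormal ℝ e) {z : E} (hz : z ∈ perpBall e) :
    liftToCone e z ∈ coneInterval e := by
  obtain ⟨h1, h2, hlt⟩ := hz
  have hz0 : ⟪z, e 0⟫ ^ 2 ≤ ‖z‖ ^ 2 := by
    have := abs_real_inner_le_norm z (e 0)
    rw [he.1 0, mul_one] at this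
    simpa [sq_abs] using sq_le_sq' (neg_le_of_abs_le this) (le_of_abs_le this)
  have hz1 : ‖z‖ ^ 2 < 1 := (sq_lt_one_iff₀ (norm_nonneg _)).2 hlt
  set b := √(1 - ⟪z, e 0⟫ ^ 2)
  set c := √(1 + ⟪z, e 0⟫ ^ 2 - ‖z‖ ^ 2)
  have hb : b ^ 2 = 1 - ⟪z, e 0⟫ ^ 2 := Real.sq_sqrt (by nlinarith)
  have hc : c ^ 2 = 1 + ⟪z, e 0⟫ ^ 2 - ‖z‖ ^ 2 := Real.sq_sqrt (by nlinarith)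
  obtain ⟨i0, i1, i2⟩ := inner_add_smul_add_smul he z b c
  refine ⟨?_, ?_, ?_, ?_⟩
  · rw [liftToCone, norm_add_smul_add_smul_sq he, h1, h2]
    linarith
  · rw [liftToCone, i0, i1, h1]
    linarith
  · rw [liftToCone, i0, i2, h2, zero_add]
    exact abs_lt_of_sq_lt_sq (by linarith) (Real.sqrt_nonneg _)
  · rw [liftToCone, i1, h1, zero_add]
    exact Real.sqrt_pos.2 (by linarith)

theorem liftToCone_orthogonalPart (he : Orthonormal ℝ e) {w : E} (hw : w ∈ coneInterval e) :
    liftToCone e (orthogonalPart e w) = w := by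
  obtain ⟨hnorm, hcirc, hlt, hpos⟩ := hw
  obtain ⟨h0, -, -⟩ := inner_orthogonalPart he w
  have hb : 1 - ⟪w, e 0⟫ ^ 2 = ⟪w, e 1⟫ ^ 2 := by linarith
  have hc : 1 + ⟪w, e 0⟫ ^ 2 - ‖orthogonalPart e w‖ ^ 2 = ⟪w, e 2⟫ ^ 2 := by
    rw [norm_orthogonalPart_sq he]
    linarith
  rw [liftToCone, h0, hb, hc, Real.sqrt_sq hpos.le,
    Real.sqrt_sq ((abs_nonneg _).trans hlt.le), orthogonalPart_add_inner_smul]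

noncomputable def intervalChart (he : Orthonormal ℝ e) : PartialHomeomorph E E where
  toFun := orthogonalPart e
  invFun := liftToCone e
  source := coneInterval e
  target := perpBall e
  map_source' _ := orthogonalPart_mem_perpBall he
  map_target' _ := liftToCone_mem_coneInterval he
  left_inv' _ := liftToCone_orthogonalPart he
  right_inv' _ hz := orthogonalPart_add_smul_add_smul he hz.1 hz.2.1 _ _
  continuousOn_toFun := by unfold orthogonalPart; fun_prop
  continuousOn_invFun := by unfold liftToCone; fun_prop

theorem setOf_isotropic_eq_coneInterval (he : Orthonormal ℝ e) (Q : E → E → ℝ)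
    (hQ : ∀ a b, Q a b = 2 * (⟪a, e 0⟫ * ⟪b, e 0⟫ + ⟪a, e 1⟫ * ⟪b, e 1⟫) - ⟪a, b⟫) :
    {w | ‖w‖ ^ 2 = 2 ∧ Q w w = 0 ∧ Q (e 0 + e 2) w < 0 ∧ Q (-e 0 + e 2) w < 0 ∧ 0 < ⟪w, e 1⟫} =
      coneInterval e := by
  ext w
  have hww : Q w w = 2 * (⟪w, e 0⟫ ^ 2 + ⟪w, e 1⟫ ^ 2) - ‖w‖ ^ 2 := by
    rw [hQ, real_inner_self_eq_norm_sq]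
    ring
  have hx : Q (e 0 + e 2) w = ⟪w, e 0⟫ - ⟪w, e 2⟫ := by
    simp [hQ, inner_add_left, orthonormal_iff_ite.mp he, he.1, real_inner_comm]
    ring
  have hy : Q (-e 0 + e 2) w = -⟪w, e 0⟫ - ⟪w, e 2⟫ := by
    simp [hQ, inner_add_left, orthonormal_iff_ite.mp he, he.1, real_inner_comm]
    ring
  simp only [Set.mem_ofPred_eq, coneInterval, hww, hx, hy, abs_lt]
  constructor
  · rintro ⟨hnorm, hiso, hxw, hyw, hpos⟩
    exact ⟨hnorm, by linarith, ⟨by linarith, by linarith⟩, hpos⟩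
  · rintro ⟨hnorm, hcirc, ⟨hlo, hhi⟩, hpos⟩
    exact ⟨hnorm, by linarith, by linarith, by linarith, hpos⟩

end SignatureTwoInterval

open SignatureTwoInterval

theorem stmt9_general {H : Type*} [NormedAddCommGroup H] [InnerProductSpace ℝ H]
    (e : HilbertBasis ℕ ℝ H)
    (Q : H → H → ℝ)
    (hQ : ∀ a b : H, Q a b =
      2 * ((inner ℝ a (e 0) : ℝ) * (inner ℝ b (e 0) : ℝ) +
            (inner ℝ a (e 1) : ℝ) * (inner ℝ b (e 1) : ℝ)) - (inner ℝ a b : ℝ)) :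
    let xbar : H := e 0 + e 2
    let ybar : H := -e 0 + e 2
    let I : Set H := {w | ‖w‖ ^ 2 = 2 ∧ Q w w = 0 ∧ Q xbar w < 0 ∧ Q ybar w < 0 ∧
      0 < (inner ℝ w (e 1) : ℝ)}
    let s : Set H := {w | (inner ℝ w (e 1) : ℝ) = 0 ∧ (inner ℝ w (e 2) : ℝ) = 0 ∧ ‖w‖ < 1}
    Convex ℝ s ∧ Bornology.IsBounded s ∧ Nonempty (↥I ≃ₜ ↥s) := by
  intro xbar ybar I s
  have hI : I = coneInterval e := setOf_isotropic_eq_coneInterval e.orthonormal Q hQ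
  exact ⟨convex_perpBall e, isBounded_perpBall e,
    ⟨(Homeomorph.setCongr hI).trans (intervalChart e.orthonormal).toHomeomorphSourceTarget⟩⟩

/-- On the real Hilbert space with orthonormal basis `(e_i)` and quadratic form `Q` of
signature `(2, ∞)` (positive on `e 0, e 1`, negative on the rest), with `x̄ = e 0 + e 2` and
`ȳ = −e 0 + e 2` spanning two isotropic lines, the interval `I_{x,y}` — realized as the set of
normalized isotropic representatives `w` with `Q(x̄,w) < 0`, `Q(ȳ,w) < 0` and positive
orientation `⟨w, e 1⟩ > 0` — is homeomorphic to the set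
`{w : ⟨w,e 1⟩ = ⟨w,e 2⟩ = 0, ‖w‖ < 1}` (the pairs `(u₁, v′)` with `u₁² + ‖v′‖² < 1`),
a bounded convex subset of a Hilbert space. -/
theorem stmt9 {H : Type*} [NormedAddCommGroup H] [InnerProductSpace ℝ H] [CompleteSpace H]
    (e : HilbertBasis ℕ ℝ H)
    (Q : H → H → ℝ)
    (hQ : ∀ a b : H, Q a b =
      2 * ((inner ℝ a (e 0) : ℝ) * (inner ℝ b (e 0) : ℝ) +
            (inner ℝ a (e 1) : ℝ) * (inner ℝ b (e 1) : ℝ)) - (inner ℝ a b : ℝ)) :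
    let xbar : H := e 0 + e 2
    let ybar : H := -e 0 + e 2
    let I : Set H := {w | ‖w‖ ^ 2 = 2 ∧ Q w w = 0 ∧ Q xbar w < 0 ∧ Q ybar w < 0 ∧
      0 < (inner ℝ w (e 1) : ℝ)}
    let s : Set H := {w | (inner ℝ w (e 1) : ℝ) = 0 ∧ (inner ℝ w (e 2) : ℝ) = 0 ∧ ‖w‖ < 1}
    Convex ℝ s ∧ Bornology.IsBounded s ∧ Nonempty (↥I ≃ₜ ↥s) :=
  stmt9_general e Q hQ
end

section
/- Let H be a real Hilbert space with a quadratic form Q of signature (2, ∞) as above, and let b, c be the isotropic lines spanned by e₁ + e₃ and −e₁ + e₃. Suppose a, d, t are isotropic lines with representatives ā = (cos θ_a, sin θ_a, v_a, w_a), d̄ = (cos θ_d, sin θ_d, v_d, w_d), t̄ = (cos θ_t, sin θ_t, v_t, w_t) (coordinates with respect to e₁, e₂, e₃ and the rest), satisfying ‖w_a‖² + v_a² = ‖w_d‖² + v_d² = ‖w_t‖² + v_t² = 1, with −π ≤ θ_d < θ_a ≤ 0, v_a > |cos θ_a|, v_d > |cos θ_d|, 0 ≤ θ_t ≤ π, v_t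 ≥ |cos θ_t|. Then Q(ā, t̄) < 0 and Q(d̄, t̄) < 0. (This proves that the closure of the interval I_{b,c} is contained in the open interval I_{a,d}.) -/
/-!
Write `Q(ā, t̄) = (cos θa cos θt - va vt) + (sin θa sin θt - ⟪wa, wt⟫)`. Since `|cos θ| ≤ v`, the
normalization `‖w‖² + v² = 1 = sin² θ + cos² θ` forces `‖w‖ ≤ |sin θ|`, strictly when
`|cos θ| < v`. The first bracket is then at most `|cos θa| |cos θt| - va vt ≤ 0`, and, as `sin θa`
and `sin θt` have opposite signs, Cauchy–Schwarz bounds the second by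
`‖wa‖ ‖wt‖ - |sin θa| |sin θt| ≤ 0`. One of the two is strict because `vt` and `sin θt` cannot
vanish together.
-/

open Real

lemma lt_abs_of_sq_add_sq_eq {n v c s : ℝ} (hn : 0 ≤ n) (h : n ^ 2 + v ^ 2 = s ^ 2 + c ^ 2)
    (hcv : |c| < v) : n < |s| := by
  have hc : c ^ 2 < v ^ 2 := sq_lt_sq' (neg_lt_of_abs_lt hcv) (lt_of_abs_lt hcv)
  have hns : n ^ 2 < s ^ 2 := by linarith
  simpa [abs_of_nonneg hn] using sq_lt_sq.mp hns

lemma le_abs_of_sq_add_sq_eq {n v c s : ℝ} (hn : 0 ≤ n) (h : n ^ 2 + v ^ 2 = s ^ 2 + c ^ 2)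
    (hcv : |c| ≤ v) : n ≤ |s| := by
  have hc : c ^ 2 ≤ v ^ 2 := sq_le_sq' (neg_le_of_abs_le hcv) (le_of_abs_le hcv)
  have hns : n ^ 2 ≤ s ^ 2 := by linarith
  simpa [abs_of_nonneg hn] using sq_le_sq.mp hns

lemma mul_add_mul_lt_mul_add_mul_of_lt_of_le {a₁ b₁ c₁ d₁ a₂ b₂ c₂ d₂ : ℝ}
    (ha₁ : 0 ≤ a₁) (hab₁ : a₁ < b₁) (hc₁ : 0 ≤ c₁) (hcd₁ : c₁ ≤ d₁)
    (ha₂ : 0 ≤ a₂) (hab₂ : a₂ < b₂) (hc₂ : 0 ≤ c₂) (hcd₂ : c₂ ≤ d₂) (hd : 0 < d₁ ∨ 0 < d₂) :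
    a₁ * c₁ + a₂ * c₂ < b₁ * d₁ + b₂ * d₂ := by
  have h₁ : a₁ * c₁ ≤ a₁ * d₁ := mul_le_mul_of_nonneg_left hcd₁ ha₁
  have h₂ : a₂ * c₂ ≤ a₂ * d₂ := mul_le_mul_of_nonneg_left hcd₂ ha₂
  have h₁' : a₁ * d₁ ≤ b₁ * d₁ := mul_le_mul_of_nonneg_right hab₁.le (hc₁.trans hcd₁)
  have h₂' : a₂ * d₂ ≤ b₂ * d₂ := mul_le_mul_of_nonneg_right hab₂.le (hc₂.trans hcd₂)
  rcases hd with hd₁ | hd₂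
  · linarith [mul_lt_mul_of_pos_right hab₁ hd₁]
  · linarith [mul_lt_mul_of_pos_right hab₂ hd₂]

lemma pairing_neg_of_sin_nonpos_of_sin_nonneg {E : Type*} [NormedAddCommGroup E]
    [InnerProductSpace ℝ E] {ca sa va ct st vt : ℝ} {wa wt : E}
    (hpa : sa ^ 2 + ca ^ 2 = 1) (hpt : st ^ 2 + ct ^ 2 = 1)
    (ha : ‖wa‖ ^ 2 + va ^ 2 = 1) (ht : ‖wt‖ ^ 2 + vt ^ 2 = 1)
    (hva : |ca| < va) (hvt : |ct| ≤ vt) (hsa : sa ≤ 0) (hst : 0 ≤ st) :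
    ca * ct + sa * st - va * vt - inner ℝ wa wt < 0 := by
  have hwa : ‖wa‖ < |sa| := lt_abs_of_sq_add_sq_eq (norm_nonneg _) (by linarith) hva
  have hwt : ‖wt‖ ≤ |st| := le_abs_of_sq_add_sq_eq (norm_nonneg _) (by linarith) hvt
  have hvt_or_hst : 0 < vt ∨ 0 < |st| := by
    by_contra! h
    have hct : ct = 0 := abs_nonpos_iff.mp (hvt.trans h.1)
    have hst0 : st = 0 := abs_nonpos_iff.mp h.2
    simp [hct, hst0] at hpt
  have key := mul_add_mul_lt_mul_add_mul_of_lt_of_le (abs_nonneg ca) hva (abs_nonneg ct) hvt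
    (norm_nonneg wa) hwa (norm_nonneg wt) hwt hvt_or_hst
  have hcos : ca * ct ≤ |ca| * |ct| := (le_abs_self _).trans (abs_mul ca ct).le
  have hsin : sa * st = -(|sa| * |st|) := by
    rw [abs_of_nonpos hsa, abs_of_nonneg hst]; ring
  have hinner : -(‖wa‖ * ‖wt‖) ≤ inner ℝ wa wt := neg_le_of_abs_le (abs_real_inner_le_norm wa wt)
  linarith

/-- Nesting of intervals in the boundary of `X_ℝ(2,∞)`: with coordinates as in the statement
(components along `e₁, e₂, e₃` and the orthogonal rest), if the isotropic representatives
`ā, d̄, t̄` satisfy the listed normalization, angle and positivity conditions, then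
`Q(ā, t̄) < 0` and `Q(d̄, t̄) < 0`. -/
theorem stmt10 {E : Type*} [NormedAddCommGroup E] [InnerProductSpace ℝ E]
    (θa θd θt va vd vt : ℝ) (wa wd wt : E)
    (ha : ‖wa‖ ^ 2 + va ^ 2 = 1) (hd : ‖wd‖ ^ 2 + vd ^ 2 = 1) (ht : ‖wt‖ ^ 2 + vt ^ 2 = 1)
    (hθd : -Real.pi ≤ θd) (hθda : θd < θa) (hθa : θa ≤ 0)
    (hva : |Real.cos θa| < va) (hvd : |Real.cos θd| < vd)
    (hθt0 : 0 ≤ θt) (hθtπ : θt ≤ Real.pi) (hvt : |Real.cos θt| ≤ vt) :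
    Real.cos θa * Real.cos θt + Real.sin θa * Real.sin θt - va * vt - (inner ℝ wa wt : ℝ) < 0 ∧
      Real.cos θd * Real.cos θt + Real.sin θd * Real.sin θt - vd * vt - (inner ℝ wd wt : ℝ) < 0 := by
  have hst : 0 ≤ sin θt := sin_nonneg_of_nonneg_of_le_pi hθt0 hθtπ
  have hsa : sin θa ≤ 0 := sin_nonpos_of_nonpos_of_neg_pi_le hθa (by linarith)
  have hsd : sin θd ≤ 0 := sin_nonpos_of_nonpos_of_neg_pi_le (by linarith) hθd
  exact ⟨pairing_neg_of_sin_nonpos_of_sin_nonneg (sin_sq_add_cos_sq θa) (sin_sq_add_cos_sq θt)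
      ha ht hva hvt hsa hst,
    pairing_neg_of_sin_nonpos_of_sin_nonneg (sin_sq_add_cos_sq θd) (sin_sq_add_cos_sq θt)
      hd ht hvd hvt hsd hst⟩
end

section
/- Let g be a bounded invertible operator on a real Hilbert space H with two one-dimensional eigenspaces spanned by ḡ⁺ and ḡ⁻ with real eigenvalues λ and λ⁻¹ where λ > 1, and suppose all other spectral values have absolute value at most μ < λ. Let w̄ = w⁺ḡ⁺ + w⁻ḡ⁻ + w₀ with w⁺ ≠ 0 and w₀ in the closed invariant complement of span(ḡ⁺, ḡ⁻). Then gⁿw̄/‖gⁿw̄‖ converges to ḡ⁺/‖ḡ⁺‖ (up to sign, and exactly if λ > 0) as n → ∞. -/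
/-!
Dividing `gⁿw̄` by `λⁿ` leaves `w⁺ḡ⁺` plus two error terms, `λ⁻ⁿgⁿ(w⁻ḡ⁻) = λ⁻²ⁿw⁻ḡ⁻` and
`λ⁻ⁿgⁿw₀`, of sizes `O(λ⁻²ⁿ)` and `O((μ/λ)ⁿ)`. Normalization `x ↦ x/‖x‖` ignores positive
scalars and is continuous away from `0`, so `gⁿw̄/‖gⁿw̄‖` tends to the normalization of
`w⁺ḡ⁺`, which is `sign(w⁺) ḡ⁺/‖ḡ⁺‖`.
-/

open Filter Topology NormedSpace

theorem ContinuousLinearMap.pow_apply_of_apply_eq_smul {R M : Type*} [CommSemiring R]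
    [TopologicalSpace M] [AddCommMonoid M] [Module R M] {T : M →L[R] M} {c : R} {x : M}
    (hx : T x = c • x) (n : ℕ) : (T ^ n) x = c ^ n • x := by
  induction n with
  | zero => simp
  | succ n ih => rw [pow_succ', mul_apply_eq_comp, ih, map_smul, hx, smul_smul, pow_succ]

section Normalize

variable {V : Type*} [NormedAddCommGroup V] [NormedSpace ℝ V]

theorem NormedSpace.continuousAt_normalize {x : V} (hx : x ≠ 0) : ContinuousAt normalize x :=
  (continuousAt_id.norm.inv₀ (norm_ne_zero_iff.2 hx)).smul continuousAt_id

theorem NormedSpace.tendsto_normalize_of_smul_tendsto {ι : Type*} {l : Filter ι} {c : ι → ℝ}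
    {v : ι → V} {a : V} (hc : ∀ i, 0 < c i) (ha : a ≠ 0)
    (h : Tendsto (fun i => c i • v i) l (𝓝 a)) :
    Tendsto (fun i => normalize (v i)) l (𝓝 (normalize a)) := by
  simpa only [Function.comp_def, normalize_smul_of_pos (hc _)] using
    (continuousAt_normalize ha).tendsto.comp h

end Normalize

theorem tendsto_inv_pow_smul_zero_of_norm_le {E : Type*} [SeminormedAddCommGroup E]
    [NormedSpace ℝ E] {x : ℕ → E} {lam mu C : ℝ} (hmu : 0 ≤ mu) (hmulam : mu < lam)
    (hx : ∀ n, ‖x n‖ ≤ mu ^ n * C) :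
    Tendsto (fun n => (lam ^ n)⁻¹ • x n) atTop (𝓝 0) := by
  have hlam : 0 < lam := hmu.trans_lt hmulam
  refine squeeze_zero_norm (a := fun n => (mu / lam) ^ n * C) (fun n => ?_) ?_
  · rw [norm_smul, norm_inv, norm_pow, Real.norm_of_nonneg hlam.le, div_pow, div_mul_eq_mul_div,
      inv_mul_eq_div]
    gcongr
    exact hx n
  · simpa using (tendsto_pow_atTop_nhds_zero_of_lt_one (by positivity)
      ((div_lt_one hlam).2 hmulam)).mul_const C

theorem stmt11_general {H : Type*} [NormedAddCommGroup H] [InnerProductSpace ℝ H]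
    (g : (H →L[ℝ] H)ˣ) (gp gm : H) (lam mu : ℝ)
    (hgp : (g : H →L[ℝ] H) gp = lam • gp) (hgm : (g : H →L[ℝ] H) gm = lam⁻¹ • gm)
    (hgp0 : gp ≠ 0) (hlam : 1 < lam)
    (H₀ : Submodule ℝ H)
    (hmu0 : 0 ≤ mu) (hmulam : mu < lam)
    (hbound : ∀ n : ℕ, ∀ x ∈ H₀, ‖((g : H →L[ℝ] H) ^ n) x‖ ≤ mu ^ n * ‖x‖)
    (wp wm : ℝ) (w₀ w : H) (hw₀ : w₀ ∈ H₀) (hwp : wp ≠ 0)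
    (hw : w = wp • gp + wm • gm + w₀) :
    ∃ ε : ℝ, (ε = 1 ∨ ε = -1) ∧
      Filter.Tendsto (fun n : ℕ => ‖((g : H →L[ℝ] H) ^ n) w‖⁻¹ • ((g : H →L[ℝ] H) ^ n) w)
        Filter.atTop (nhds (ε • ‖gp‖⁻¹ • gp)) := by
  set T : H →L[ℝ] H := (g : H →L[ℝ] H)
  have hlam0 : 0 < lam := one_pos.trans hlam
  have hgm_decay : Tendsto (fun n => (lam ^ n)⁻¹ • (T ^ n) (wm • gm)) atTop (𝓝 0) :=
    tendsto_inv_pow_smul_zero_of_norm_le (inv_nonneg.2 hlam0.le)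
      ((inv_lt_one_of_one_lt₀ hlam).trans hlam) fun n => by
        rw [map_smul, T.pow_apply_of_apply_eq_smul hgm, smul_comm, norm_smul (lam⁻¹ ^ n),
          Real.norm_of_nonneg (by positivity)]
  have hw₀_decay : Tendsto (fun n => (lam ^ n)⁻¹ • (T ^ n) w₀) atTop (𝓝 0) :=
    tendsto_inv_pow_smul_zero_of_norm_le hmu0 hmulam fun n => hbound n w₀ hw₀
  have hscaled : Tendsto (fun n => (lam ^ n)⁻¹ • (T ^ n) w) atTop (𝓝 (wp • gp)) := by
    have hsplit : ∀ n : ℕ, (lam ^ n)⁻¹ • (T ^ n) w =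
        wp • gp + (lam ^ n)⁻¹ • (T ^ n) (wm • gm) + (lam ^ n)⁻¹ • (T ^ n) w₀ := fun n => by
      rw [hw, map_add, map_add, map_smul (T ^ n) wp, T.pow_apply_of_apply_eq_smul hgp, smul_comm,
        smul_add, smul_add, smul_smul, inv_mul_cancel₀ (pow_pos hlam0 n).ne', one_smul]
    simpa only [hsplit, add_zero] using (tendsto_const_nhds.add hgm_decay).add hw₀_decay
  have hnormalized := tendsto_normalize_of_smul_tendsto (fun n => inv_pos.2 (pow_pos hlam0 n))
    (smul_ne_zero hwp hgp0) hscaled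
  rw [normalize_smul] at hnormalized
  refine ⟨SignType.sign wp, ?_, hnormalized⟩
  rcases hwp.lt_or_gt with hwp_neg | hwp_pos
  · simp [hwp_neg]
  · simp [hwp_pos]

/-- Let `g ∈ GL(H)` have eigenvectors `ḡ⁺, ḡ⁻` with eigenvalues `λ > 1` and `λ⁻¹`, and let
`H₀` be a closed invariant complement on which the iterates of `g` grow at most like `μⁿ`
with `μ < λ`. If `w̄ = w⁺ḡ⁺ + w⁻ḡ⁻ + w₀` with `w⁺ ≠ 0` and `w₀ ∈ H₀`, then
`gⁿw̄/‖gⁿw̄‖` converges (up to sign) to `ḡ⁺/‖ḡ⁺‖`. -/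
theorem stmt11 {H : Type*} [NormedAddCommGroup H] [InnerProductSpace ℝ H] [CompleteSpace H]
    (g : (H →L[ℝ] H)ˣ) (gp gm : H) (lam mu : ℝ)
    (hgp : (g : H →L[ℝ] H) gp = lam • gp) (hgm : (g : H →L[ℝ] H) gm = lam⁻¹ • gm)
    (hgp0 : gp ≠ 0) (hlam : 1 < lam)
    (H₀ : Submodule ℝ H) (hH₀closed : IsClosed (H₀ : Set H))
    (hspan : (Submodule.span ℝ {gp, gm}) ⊔ H₀ = ⊤)
    (hindep : (Submodule.span ℝ {gp, gm}) ⊓ H₀ = ⊥)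
    (hinv : ∀ x ∈ H₀, (g : H →L[ℝ] H) x ∈ H₀)
    (hmu0 : 0 ≤ mu) (hmulam : mu < lam)
    (hbound : ∀ n : ℕ, ∀ x ∈ H₀, ‖((g : H →L[ℝ] H) ^ n) x‖ ≤ mu ^ n * ‖x‖)
    (wp wm : ℝ) (w₀ w : H) (hw₀ : w₀ ∈ H₀) (hwp : wp ≠ 0)
    (hw : w = wp • gp + wm • gm + w₀) :
    ∃ ε : ℝ, (ε = 1 ∨ ε = -1) ∧
      Filter.Tendsto (fun n : ℕ => ‖((g : H →L[ℝ] H) ^ n) w‖⁻¹ • ((g : H →L[ℝ] H) ^ n) w)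
        Filter.atTop (nhds (ε • ‖gp‖⁻¹ • gp)) :=
  stmt11_general g gp gm lam mu hgp hgm hgp0 hlam H₀ hmu0 hmulam hbound wp wm w₀ w hw₀ hwp hw
end
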